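/- Appendix, completion of Proposition 3.2: D(A*) ⊆ S; combined with S ⊆ D(A*) and A*|_S = L, this yields A* = L with D(A*) = S. The proof shows that for any x ∈ D(A*), the element x − L^{-1}A*x is orthogonal in X to the range of A; since A is boundedly invertible on X, x = L^{-1}A*x ∈ S. -/
import Mathlib


/-!
Abstract formalization of the Biot–Stokes dynamics operator of
Avalos–Webster, "Uniqueness of Weak Solutions for Biot-Stokes Interactions".

The concrete spaces are abstracted:
* `U`  : `𝐔 = 𝐇¹_{#,*}(Ω_b)` with inner product `a_E(·,·) = (σ^E(·), D(·))`,
* `Vb` : `𝐋²(Ω_b)`, `Hb` : `L²(Ω_b)`, `Qb` : `H¹_{#,*}(Ω_b)`,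
* `V`  : the divergence-free space `𝐕 ⊆ 𝐋²(Ω_f)`, `Wf` : `𝐇¹_{#}(Ω_f) ∩ 𝐕` with `v|_{Γ_f} = 0`,
* `Hf` : `L²(Ω_f)` (Stokes pressures), `GI'` : `H^{-1/2}(Γ_I)`,
with inclusions `incU : U → Vb`, `incQ : Qb → Hb`, `incWV : Wf → V`, the differential maps
`gradQ p = ∇p`, `divU u = ∇·u`, the distributional relations
`DivSigE u f ↔ ∇·σ^E(u) = f ∈ 𝐋²(Ω_b)`, `LapQ p g ↔ Δp = g ∈ L²(Ω_b)`,
`StokesRel v π f ↔ νΔv − ∇π = f ∈ 𝐕`, `PiBVP p v π` (the harmonic Stokes-pressure BVP (2.12)),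
and the generalized interface traces on `Γ_I` valued in `GI' = H^{-1/2}(Γ_I)`:
`jNU w = w·e₃`, `jTU i w = w·τᵢ`, `jNW v = v·e₃`, `jTW i v = v·τᵢ`, `jQ p = p|_{Γ_I}`,
`jDn (p, Δp) = ∂_{e₃} p`, `jSigE i (u, ∇·σ^E(u)) = (σ^E(u)e₃)ᵢ`,
`jSigF i ((v, π), νΔv−∇π) = (σ_f(v,π)e₃)ᵢ` (index `2` = normal component, `0,1` tangential).
The energy space `X` is abstract, identified with `U × Vb × Hb × V` through a linear
equivalence `e`, carrying the weighted inner product (2.10).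
-/

open MeasureTheory Set
open scoped RealInnerProductSpace ENNReal

noncomputable section

variable {U Vb Hb Qb V Wf Hf GI' : Type*}
  [NormedAddCommGroup U] [InnerProductSpace ℝ U] [CompleteSpace U]
  [NormedAddCommGroup Vb] [InnerProductSpace ℝ Vb] [CompleteSpace Vb]
  [NormedAddCommGroup Hb] [InnerProductSpace ℝ Hb] [CompleteSpace Hb]
  [NormedAddCommGroup Qb] [InnerProductSpace ℝ Qb] [CompleteSpace Qb]
  [NormedAddCommGroup V] [InnerProductSpace ℝ V] [CompleteSpace V]
  [NormedAddCommGroup Wf] [InnerProductSpace ℝ Wf] [CompleteSpace Wf]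
  [NormedAddCommGroup Hf] [InnerProductSpace ℝ Hf] [CompleteSpace Hf]
  [AddCommGroup GI'] [Module ℝ GI']

/-- The graph relation of the Biot–Stokes generator `𝒜` (Definition 2.2 of the paper):
`BSDomRel ... y z` holds iff `y = [u, w, p, v] ∈ 𝒟(𝒜)` and `z = 𝒜y`; i.e. `w ∈ 𝐔`,
`p ∈ H¹_{#,*}(Ω_b)`, `v ∈ 𝐇¹_{#}(Ω_f) ∩ 𝐕` with `∇·σ^E(u) ∈ 𝐋²(Ω_b)`, `Δp ∈ L²(Ω_b)`,
`νΔv − ∇π ∈ 𝐕` for the Stokes pressure `π = π(p,v)` of (2.12), with the interface conditions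
`(v−w)·e₃ = −k∇p·e₃`, `β(v−w)·τ = −τ·σ_f e₃`, `−e₃·σ_f e₃ = p`, `σ_b e₃ = σ_f e₃` on `Γ_I`,
and `z = [w, ρ_b⁻¹∇·σ^E(u) − αρ_b⁻¹∇p, −αc₀⁻¹∇·w + c₀⁻¹kΔp, ρ_f⁻¹(νΔv − ∇π)]`. -/
def BSDomRel
    (ρb ρf α k β c0 : ℝ)
    (incU : U →L[ℝ] Vb) (incQ : Qb →L[ℝ] Hb) (gradQ : Qb →L[ℝ] Vb) (divU : U →L[ℝ] Hb)
    (incWV : Wf →L[ℝ] V)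
    (DivSigE : U → Vb → Prop) (LapQ : Qb → Hb → Prop)
    (StokesRel : Wf → Hf → V → Prop) (PiBVP : Qb → Wf → Hf → Prop)
    (jNU : U →ₗ[ℝ] GI') (jTU : Fin 2 → U →ₗ[ℝ] GI')
    (jNW : Wf →ₗ[ℝ] GI') (jTW : Fin 2 → Wf →ₗ[ℝ] GI') (jQ : Qb →ₗ[ℝ] GI')
    (jDn : Qb × Hb →ₗ[ℝ] GI')
    (jSigE : Fin 3 → U × Vb →ₗ[ℝ] GI')
    (jSigF : Fin 3 → (Wf × Hf) × V →ₗ[ℝ] GI')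
    (y z : U × Vb × Hb × V) : Prop :=
  ∃ (w : U) (pq : Qb) (vw : Wf) (dsig : Vb) (lp : Hb) (pif : Hf) (f : V),
    incU w = y.2.1 ∧ incQ pq = y.2.2.1 ∧ incWV vw = y.2.2.2 ∧
    DivSigE y.1 dsig ∧ LapQ pq lp ∧ StokesRel vw pif f ∧ PiBVP pq vw pif ∧
    -- interface conditions on `Γ_I`, in the `H^{-1/2}(Γ_I)` sense:
    (jNW vw - jNU w = -(k • jDn (pq, lp))) ∧
    (∀ i : Fin 2, β • (jTW i vw - jTU i w) = -(jSigF i.castSucc ((vw, pif), f))) ∧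
    (-(jSigF 2 ((vw, pif), f)) = jQ pq) ∧
    (∀ i : Fin 2, jSigE i.castSucc (y.1, dsig) = jSigF i.castSucc ((vw, pif), f)) ∧
    (jSigE 2 (y.1, dsig) - α • jQ pq = jSigF 2 ((vw, pif), f)) ∧
    -- the action of `𝒜`:
    z.1 = w ∧
    z.2.1 = ρb⁻¹ • dsig - (α * ρb⁻¹) • gradQ pq ∧
    z.2.2.1 = -((α * c0⁻¹) • divU w) + (k * c0⁻¹) • lp ∧
    z.2.2.2 = ρf⁻¹ • f

/-- The graph relation of the operator `𝓛` on the set `𝒮` (the adjoint candidate, Proposition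
3.2 / Definition A.1 of the paper): `BSAdjRel ... y z` holds iff `y = [ũ, w̃, p̃, ṽ] ∈ 𝒮`
— same Sobolev regularity as `𝒟(𝒜)`, but the sign-changed interface conditions
`(ṽ−w̃)·e₃ = k∇p̃·e₃`, `β(ṽ−w̃)·τ = −τ·σ_f e₃`, `e₃·σ_f e₃ = p̃`, `−σ_b e₃ = σ_f e₃` on `Γ_I`,
where the Stokes pressure `π̃` solves the adjoint BVP (3.30) with interface datum
`π̃ = e₃·σ_b(ũ,p̃)e₃ + 2νe₃·D(ṽ)e₃` — and
`z = 𝓛y = [−w̃, ρ_b⁻¹∇·σ^E(ũ) + αρ_b⁻¹∇p̃, αc₀⁻¹∇·w̃ + c₀⁻¹kΔp̃, ρ_f⁻¹(νΔṽ − ∇π̃)]`. -/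
def BSAdjRel
    (ρb ρf α k β c0 : ℝ)
    (incU : U →L[ℝ] Vb) (incQ : Qb →L[ℝ] Hb) (gradQ : Qb →L[ℝ] Vb) (divU : U →L[ℝ] Hb)
    (incWV : Wf →L[ℝ] V)
    (DivSigE : U → Vb → Prop) (LapQ : Qb → Hb → Prop)
    (StokesRel : Wf → Hf → V → Prop) (PiBVPAdj : U → Vb → Qb → Wf → Hf → Prop)
    (jNU : U →ₗ[ℝ] GI') (jTU : Fin 2 → U →ₗ[ℝ] GI')
    (jNW : Wf →ₗ[ℝ] GI') (jTW : Fin 2 → Wf →ₗ[ℝ] GI') (jQ : Qb →ₗ[ℝ] GI')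
    (jDn : Qb × Hb →ₗ[ℝ] GI')
    (jSigE : Fin 3 → U × Vb →ₗ[ℝ] GI')
    (jSigF : Fin 3 → (Wf × Hf) × V →ₗ[ℝ] GI')
    (y z : U × Vb × Hb × V) : Prop :=
  ∃ (w : U) (pq : Qb) (vw : Wf) (dsig : Vb) (lp : Hb) (pif : Hf) (f : V),
    incU w = y.2.1 ∧ incQ pq = y.2.2.1 ∧ incWV vw = y.2.2.2 ∧
    DivSigE y.1 dsig ∧ LapQ pq lp ∧ StokesRel vw pif f ∧ PiBVPAdj y.1 dsig pq vw pif ∧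
    -- sign-changed interface conditions on `Γ_I`:
    (jNW vw - jNU w = k • jDn (pq, lp)) ∧
    (∀ i : Fin 2, β • (jTW i vw - jTU i w) = -(jSigF i.castSucc ((vw, pif), f))) ∧
    (jSigF 2 ((vw, pif), f) = jQ pq) ∧
    (∀ i : Fin 2, -(jSigE i.castSucc (y.1, dsig)) = jSigF i.castSucc ((vw, pif), f)) ∧
    (-(jSigE 2 (y.1, dsig) - α • jQ pq) = jSigF 2 ((vw, pif), f)) ∧
    -- the action of `𝓛` (the adjoint action (3.29)):
    z.1 = -w ∧
    z.2.1 = ρb⁻¹ • dsig + (α * ρb⁻¹) • gradQ pq ∧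
    z.2.2.1 = (α * c0⁻¹) • divU w + (k * c0⁻¹) • lp ∧
    z.2.2.2 = ρf⁻¹ • f

/-- Appendix, completion of the proof of Proposition 3.2: given that
`𝒮 ⊆ 𝒟(𝒜*)` with `𝒜*|_𝒮 = 𝓛` (Lemma 1), that `𝓛` is boundedly invertible (Lemma 2), and
that `𝒜` is boundedly invertible on `X`, one has `𝒟(𝒜*) ⊆ 𝒮`; combined with `𝒮 ⊆ 𝒟(𝒜*)`
this yields `𝒜* = 𝓛` with `𝒟(𝒜*) = 𝒮` (graph equality). -/
theorem biotStokes_adjoint_domain_subset_S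
    (ρb ρf ν α μe lam k β c0 : ℝ)
    (hρb : 0 < ρb) (hρf : 0 < ρf) (hν : 0 < ν) (hα : 0 < α)
    (hμe : 0 < μe) (hlam : 0 ≤ lam) (hk : 0 < k) (hβ : 0 < β) (hc0 : 0 < c0)
    (incU : U →L[ℝ] Vb) (incQ : Qb →L[ℝ] Hb) (gradQ : Qb →L[ℝ] Vb) (divU : U →L[ℝ] Hb)
    (incWV : Wf →L[ℝ] V)
    (DivSigE : U → Vb → Prop) (LapQ : Qb → Hb → Prop)
    (StokesRel : Wf → Hf → V → Prop) (PiBVP : Qb → Wf → Hf → Prop)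
    (PiBVPAdj : U → Vb → Qb → Wf → Hf → Prop)
    (jNU : U →ₗ[ℝ] GI') (jTU : Fin 2 → U →ₗ[ℝ] GI')
    (jNW : Wf →ₗ[ℝ] GI') (jTW : Fin 2 → Wf →ₗ[ℝ] GI') (jQ : Qb →ₗ[ℝ] GI')
    (jDn : Qb × Hb →ₗ[ℝ] GI')
    (jSigE : Fin 3 → U × Vb →ₗ[ℝ] GI')
    (jSigF : Fin 3 → (Wf × Hf) × V →ₗ[ℝ] GI')
    {X : Type*} [NormedAddCommGroup X] [InnerProductSpace ℝ X] [CompleteSpace X]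
    (e : X ≃ₗ[ℝ] U × Vb × Hb × V)
    (hInner : ∀ y y' : X,
      ⟪y, y'⟫ = ⟪(e y).1, (e y').1⟫ + ρb * ⟪(e y).2.1, (e y').2.1⟫
        + c0 * ⟪(e y).2.2.1, (e y').2.2.1⟫ + ρf * ⟪(e y).2.2.2, (e y').2.2.2⟫)
    (A : X →ₗ.[ℝ] X)
    (hdense : Dense (A.domain : Set X))
    (hA : ∀ y z : X, (y, z) ∈ A.graph ↔
      BSDomRel ρb ρf α k β c0 incU incQ gradQ divU incWV DivSigE LapQ StokesRel PiBVP
        jNU jTU jNW jTW jQ jDn jSigE jSigF (e y) (e z))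
    -- Lemma 1: `𝒮 ⊆ 𝒟(𝒜*)` and `𝒜*|_𝒮 = 𝓛`
    (hL_le : ∀ ytil ztil : X,
      BSAdjRel ρb ρf α k β c0 incU incQ gradQ divU incWV DivSigE LapQ StokesRel PiBVPAdj
        jNU jTU jNW jTW jQ jDn jSigE jSigF (e ytil) (e ztil) →
      (ytil, ztil) ∈ A.adjoint.graph)
    -- Lemma 2: `𝓛` is boundedly invertible on `X`
    (hLinv : ∃ C : ℝ, 0 < C ∧ ∀ ystar : X,
      (∃! y : X,
        BSAdjRel ρb ρf α k β c0 incU incQ gradQ divU incWV DivSigE LapQ StokesRel PiBVPAdj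
          jNU jTU jNW jTW jQ jDn jSigE jSigF (e y) (e ystar)) ∧
      (∀ y : X,
        BSAdjRel ρb ρf α k β c0 incU incQ gradQ divU incWV DivSigE LapQ StokesRel PiBVPAdj
          jNU jTU jNW jTW jQ jDn jSigE jSigF (e y) (e ystar) → ‖y‖ ≤ C * ‖ystar‖))
    -- `𝒜` is boundedly invertible on `X`
    (hAinv : ∃ C : ℝ, 0 < C ∧
      (∀ z : X, ∃ y : X, (y, z) ∈ A.graph) ∧
      (∀ y z : X, (y, z) ∈ A.graph → ‖y‖ ≤ C * ‖z‖)) :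
    -- `𝒟(𝒜*) ⊆ 𝒮`, and `𝒜* = 𝓛` as graphs
    (∀ x : X, x ∈ A.adjoint.domain →
      ∃ z : U × Vb × Hb × V,
        BSAdjRel ρb ρf α k β c0 incU incQ gradQ divU incWV DivSigE LapQ StokesRel PiBVPAdj
          jNU jTU jNW jTW jQ jDn jSigE jSigF (e x) z) ∧
    (∀ y z : X, (y, z) ∈ A.adjoint.graph ↔
      BSAdjRel ρb ρf α k β c0 incU incQ gradQ divU incWV DivSigE LapQ StokesRel PiBVPAdj
        jNU jTU jNW jTW jQ jDn jSigE jSigF (e y) (e z)) := by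

  have key : ∀ a b : X, (a, b) ∈ A.adjoint.graph → ∀ u v : X, (u, v) ∈ A.graph →
      ⟪a, v⟫ = ⟪b, u⟫ := by
    intro a b hab u v huv
    rw [LinearPMap.mem_graph_iff] at hab huv
    obtain ⟨ya, ha1, ha2⟩ := hab
    obtain ⟨yu, hu1, hu2⟩ := huv
    have := A.adjoint_isFormalAdjoint hdense ya yu
    simp only [ha1, ha2, hu1, hu2] at this
    exact this.symm
  have h2 : ∀ y z : X, (y, z) ∈ A.adjoint.graph ↔
      BSAdjRel ρb ρf α k β c0 incU incQ gradQ divU incWV DivSigE LapQ StokesRel PiBVPAdj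
        jNU jTU jNW jTW jQ jDn jSigE jSigF (e y) (e z) := by
    intro x z
    constructor
    · intro hxz
      obtain ⟨C, hC, hL⟩ := hLinv
      obtain ⟨⟨y, hy, -⟩, -⟩ := hL z
      have hyz := hL_le y z hy
      have hxy : x = y := by
        obtain ⟨CA, hCA, hsurj, hbd⟩ := hAinv
        apply ext_inner_right ℝ
        intro v
        obtain ⟨u, hu⟩ := hsurj v
        rw [key x z hxz u v hu, key y z hyz u v hu]
      rwa [hxy]
    · intro h
      exact hL_le x z h
  refine ⟨?_, h2⟩
  intro x hx
  exact ⟨e (A.adjoint ⟨x, hx⟩), (h2 x (A.adjoint ⟨x, hx⟩)).mp (A.adjoint.mem_graph ⟨x, hx⟩)⟩
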